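/- arXiv:2407.19307 — 7 statements merged into one kernel-verified Lean document; each statement's English description precedes it below -/
import Mathlib

section
/- Every solution a in the quadratic order O₉ = ℤ + ℤ·3·((-1+√5)/2) ⊂ ℚ(√5) of the norm equation Nm(a) = -9 is of the form a = ±3·u_f^(2n+1) for some integer n, where u_f = (1+√5)/2 is the fundamental unit of the ring of integers of ℚ(√5). -/
/-!
Writing the element as `x + yφ` with `x = m - 3n`, `y = 3n`, the equation says that the norm
`x² + xy - y²` is `-9`. Since `3` is inert in `ℤ[φ]`, `3 ∣ x`, so `x + yφ = 3(s + nφ)` with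
`s + nφ` of norm `-1`. Units of `ℤ[φ]` with nonnegative coordinates are powers `φ^j` by the descent
`s + tφ = φ((t - s) + sφ)`, the parity of `j` being read off the norm; the other units are
obtained from these by negation and by `u ↦ ±u⁻¹ = ±(conjugate of u)`.
-/

open Real
open scoped goldenRatio

/-- The norm of `s + t φ` from `ℚ(√5)` to `ℚ`. -/
def goldenNorm (s t : ℤ) : ℤ := s ^ 2 + s * t - t ^ 2

lemma goldenNorm_mul_mul (c s t : ℤ) : goldenNorm (c * s) (c * t) = c ^ 2 * goldenNorm s t := by
  unfold goldenNorm; ring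

lemma goldenNorm_sub_swap (s t : ℤ) : goldenNorm (t - s) s = -goldenNorm s t := by
  unfold goldenNorm; ring

lemma goldenNorm_eq_mul_conj (s t : ℤ) :
    (goldenNorm s t : ℝ) = (s + t * φ) * (s + t * ψ) := by
  rw [← one_sub_goldenConj]
  unfold goldenNorm
  push_cast
  linear_combination (t : ℝ) ^ 2 * goldenRatio_sq

lemma three_dvd_of_three_dvd_goldenNorm {s t : ℤ} (h : 3 ∣ goldenNorm s t) : 3 ∣ s ∧ 3 ∣ t := by
  have inert : ∀ a b : ZMod 3, a ^ 2 + a * b - b ^ 2 = 0 → a = 0 ∧ b = 0 := by decide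
  simp only [show (3 : ℤ) = (3 : ℕ) from rfl, ← ZMod.intCast_zmod_eq_zero_iff_dvd] at h ⊢
  unfold goldenNorm at h
  push_cast at h
  exact inert _ _ h

lemma exists_pow_of_isUnit_goldenNorm {s t : ℤ} (hs : 0 ≤ s) (ht : 0 ≤ t)
    (hu : IsUnit (goldenNorm s t)) :
    ∃ j : ℕ, s + t * φ = φ ^ j ∧ goldenNorm s t = (-1) ^ j := by
  have hu' := Int.isUnit_iff.mp hu
  unfold goldenNorm at hu'
  rcases hs.eq_or_lt with rfl | hs
  · obtain rfl : t = 1 := by rcases hu' with h | h <;> nlinarith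
    exact ⟨1, by push_cast; ring, by decide⟩
  rcases ht.eq_or_lt with rfl | ht
  · obtain rfl : s = 1 := by rcases hu' with h | h <;> nlinarith
    exact ⟨0, by push_cast; ring, by decide⟩
  have hst : s ≤ t := by rcases hu' with h | h <;> nlinarith
  obtain ⟨j, hpow, hnorm⟩ := exists_pow_of_isUnit_goldenNorm (s := t - s) (t := s) (by omega) hs.le
    (by rw [goldenNorm_sub_swap]; exact hu.neg)
  refine ⟨j + 1, ?_, ?_⟩
  · rw [pow_succ, ← hpow]
    push_cast
    linear_combination (-(s : ℝ)) * goldenRatio_sq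
  · rw [goldenNorm_sub_swap] at hnorm
    rw [pow_succ, ← hnorm]
    ring
termination_by (s + t).toNat
decreasing_by omega

lemma exists_odd_pow_of_goldenNorm_eq_neg_one {s t : ℤ} (hs : 0 ≤ s) (ht : 0 ≤ t)
    (h : goldenNorm s t = -1) : ∃ a : ℕ, s + t * φ = φ ^ (2 * a + 1) := by
  obtain ⟨j, hpow, hnorm⟩ := exists_pow_of_isUnit_goldenNorm hs ht (by rw [h]; decide)
  obtain ⟨a, rfl⟩ : Odd j := (neg_one_pow_eq_neg_one_iff_odd (by decide)).mp (hnorm ▸ h)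
  exact ⟨a, hpow⟩

lemma exists_odd_zpow_of_goldenNorm_eq_neg_one {s t : ℤ} (ht : 0 ≤ t)
    (h : goldenNorm s t = -1) : ∃ k : ℤ, s + t * φ = φ ^ (2 * k + 1) := by
  rcases le_or_gt 0 s with hs | hs
  · obtain ⟨a, ha⟩ := exists_odd_pow_of_goldenNorm_eq_neg_one hs ht h
    exact ⟨a, by rw [ha, ← zpow_natCast]; push_cast; rfl⟩
  -- `s + tφ` is the inverse of `-(s + tψ) = -(s + t) + tφ`, whose coordinates are nonnegative
  have hst : s + t ≤ 0 := by unfold goldenNorm at h; nlinarith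
  have hconj : goldenNorm (-(s + t)) t = -1 := by unfold goldenNorm at h ⊢; linear_combination h
  obtain ⟨a, ha⟩ := exists_odd_pow_of_goldenNorm_eq_neg_one (by omega) ht hconj
  have hmul := goldenNorm_eq_mul_conj s t
  rw [h, ← one_sub_goldenConj, Int.cast_neg, Int.cast_one] at hmul
  refine ⟨-a - 1, ?_⟩
  rw [show 2 * (-a - 1 : ℤ) + 1 = -(2 * a + 1 : ℕ) by push_cast; ring, zpow_neg, zpow_natCast, ← ha]
  push_cast
  refine eq_inv_of_mul_eq_one_left ?_
  linear_combination hmul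

lemma exists_sign_odd_zpow_of_goldenNorm_eq_neg_one {s t : ℤ} (h : goldenNorm s t = -1) :
    ∃ (k : ℤ) (ε : ℝ), (ε = 1 ∨ ε = -1) ∧ s + t * φ = ε * φ ^ (2 * k + 1) := by
  rcases le_or_gt 0 t with ht | ht
  · obtain ⟨k, hk⟩ := exists_odd_zpow_of_goldenNorm_eq_neg_one ht h
    exact ⟨k, 1, .inl rfl, by rw [hk, one_mul]⟩
  · obtain ⟨k, hk⟩ := exists_odd_zpow_of_goldenNorm_eq_neg_one (s := -s) (t := -t) (by omega)
      (by rw [← h]; unfold goldenNorm; ring)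
    refine ⟨k, -1, .inr rfl, ?_⟩
    push_cast at hk
    linear_combination -hk

/-- Case `k = 9` of Proposition 4.2: every element `a = m + n·3·(-1+√5)/2` of the order
`O₉ = ℤ + ℤ·3(-1+√5)/2 ⊂ ℚ(√5)` with norm `-9` equals `±3·u_f^(2n+1)`, where
`u_f = (1+√5)/2` is the fundamental unit. -/
theorem stmt4 (m n : ℤ)
    (h : ((m : ℚ) - 3 * n / 2)^2 - 5 * (3 * (n : ℚ) / 2)^2 = -9) :
    ∃ (k : ℤ) (ε : ℝ), (ε = 1 ∨ ε = -1) ∧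
      ((m : ℝ) - 3 * n / 2) + (3 * n / 2) * Real.sqrt 5 =
        ε * 3 * (((1 + Real.sqrt 5) / 2) ^ (2 * k + 1)) := by
  have hnorm : goldenNorm (m - 3 * n) (3 * n) = -9 := by
    have : (goldenNorm (m - 3 * n) (3 * n) : ℚ) = -9 := by
      unfold goldenNorm; push_cast; linear_combination h
    exact_mod_cast this
  obtain ⟨⟨s, hs⟩, -⟩ := three_dvd_of_three_dvd_goldenNorm (s := m - 3 * n) (t := 3 * n)
    (by rw [hnorm]; decide)
  have hunit : goldenNorm s n = -1 := by
    rw [hs, goldenNorm_mul_mul] at hnorm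
    omega
  obtain ⟨k, ε, hε, hk⟩ := exists_sign_odd_zpow_of_goldenNorm_eq_neg_one hunit
  refine ⟨k, ε, hε, ?_⟩
  have hm : (m : ℝ) = 3 * s + 3 * n := by exact_mod_cast (by omega : m = 3 * s + 3 * n)
  calc ((m : ℝ) - 3 * n / 2) + (3 * n / 2) * √5 = 3 * (s + n * φ) := by rw [hm]; ring
    _ = ε * 3 * φ ^ (2 * k + 1) := by rw [hk]; ring
end

section
/- Every element of ℤ[√3] with norm in the interval [-6, -1] has norm -3 or -2, assuming it corresponds to a coprime pair (i.e., is primitive). Every solution of Nm(a) = -3 in ℤ[√3] is of the form ±√3·u_f^n, and every solution of Nm(a) = -2 is of the form ±(-1+√3)·u_f^n, where u_f = 2 + √3. -/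
/-!
The norm form `x² - 3y²` never takes the values `-1, -4, -6` modulo 9, and it is divisible by 5
only when `x` and `y` both are, since 3 is not a square modulo 5; this leaves `-3` and `-2` for a
primitive element of norm in `[-6, -1]`. An element of norm `-3` is `√3` times a unit of norm 1,
and one of norm `-2` is `(-1 + √3)` times such a unit, because `-1 + √3` has norm `-2` and
`(x + y√3)(1 + √3) ∈ 2ℤ[√3]` when `x ≡ y mod 2`. Finally every unit of norm 1 is `±(2 + √3)ⁿ`,
since `(2, 1)` is the fundamental solution of Pell's equation `u² - 3v² = 1`.
-/

open Pell

namespace Pell.Solution₁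

variable {d : ℤ}

noncomputable def toRealUnits (hd : 0 ≤ d) : Solution₁ d →* ℝˣ :=
  (Units.map (Zsqrtd.lift ⟨√(d : ℝ), Real.mul_self_sqrt (by exact_mod_cast hd)⟩ :
    ℤ√d →+* ℝ).toMonoidHom).comp Unitary.toUnits

theorem coe_toRealUnits (hd : 0 ≤ d) (a : Solution₁ d) :
    (toRealUnits hd a : ℝ) = a.x + a.y * √(d : ℝ) := rfl

end Pell.Solution₁

theorem Pell.IsFundamental.exists_eq_sign_mul_zpow {d : ℤ} {a : Solution₁ d}
    (ha : IsFundamental a) (b : Solution₁ d) :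
    ∃ (n : ℤ) (ε : ℝ), (ε = 1 ∨ ε = -1) ∧
      (b.x : ℝ) + b.y * √(d : ℝ) = ε * ((a.x : ℝ) + a.y * √(d : ℝ)) ^ n := by
  have hd := ha.d_pos.le
  have hzpow (n : ℤ) :
      ((a ^ n).x : ℝ) + (a ^ n).y * √(d : ℝ) = ((a.x : ℝ) + a.y * √(d : ℝ)) ^ n := by
    rw [← Solution₁.coe_toRealUnits hd, ← Solution₁.coe_toRealUnits hd, map_zpow,
      Units.val_zpow_eq_zpow_val]
  obtain ⟨n, rfl | rfl⟩ := ha.eq_zpow_or_neg_zpow b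
  · exact ⟨n, 1, .inl rfl, by rw [hzpow, one_mul]⟩
  · refine ⟨n, -1, .inr rfl, ?_⟩
    rw [← hzpow, Solution₁.x_neg, Solution₁.y_neg]
    push_cast
    ring

theorem Pell.isFundamental_two_one :
    IsFundamental (Solution₁.mk 2 1 (by norm_num) : Solution₁ 3) := by
  refine ⟨by norm_num, by norm_num, fun {b} hb => ?_⟩
  rw [Solution₁.x_mk]
  omega

theorem exists_eq_sign_mul_zpow_of_sq_sub_three_mul_sq_eq_one {u v : ℤ}
    (h : u ^ 2 - 3 * v ^ 2 = 1) :
    ∃ (n : ℤ) (ε : ℝ), (ε = 1 ∨ ε = -1) ∧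
      (u : ℝ) + v * √3 = ε * (2 + √3) ^ n := by
  simpa using isFundamental_two_one.exists_eq_sign_mul_zpow (Solution₁.mk u v h)

theorem sq_sub_three_mul_sq_ne_of_zmod_nine (x y : ℤ) {n : ℤ}
    (hn : (n : ZMod 9) ∈ ({3, 5, 8} : Finset (ZMod 9))) : x ^ 2 - 3 * y ^ 2 ≠ n := by
  have hmod : ∀ a b : ZMod 9, a ^ 2 - 3 * b ^ 2 ∉ ({3, 5, 8} : Finset (ZMod 9)) := by decide
  rintro rfl
  exact hmod x y (by exact_mod_cast hn)

theorem five_dvd_of_five_dvd_sq_sub_three_mul_sq {x y : ℤ} (h : 5 ∣ x ^ 2 - 3 * y ^ 2) :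
    5 ∣ x ∧ 5 ∣ y := by
  have hmod : ∀ a b : ZMod 5, a ^ 2 - 3 * b ^ 2 = 0 → a = 0 ∧ b = 0 := by decide
  have hcast (z : ℤ) : (z : ZMod 5) = 0 ↔ 5 ∣ z := ZMod.intCast_zmod_eq_zero_iff_dvd z 5
  rw [← hcast] at h
  rw [← hcast, ← hcast]
  exact hmod x y (by exact_mod_cast h)

theorem sq_sub_three_mul_sq_eq_neg_three_or_neg_two {x y : ℤ} (hxy : Int.gcd x y = 1)
    (hlo : -6 ≤ x ^ 2 - 3 * y ^ 2) (hhi : x ^ 2 - 3 * y ^ 2 ≤ -1) :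
    x ^ 2 - 3 * y ^ 2 = -3 ∨ x ^ 2 - 3 * y ^ 2 = -2 := by
  have hne_five : x ^ 2 - 3 * y ^ 2 ≠ -5 := by
    intro h
    obtain ⟨hx, hy⟩ := five_dvd_of_five_dvd_sq_sub_three_mul_sq ⟨-1, by rw [h]; norm_num⟩
    have := Int.dvd_coe_gcd hx hy
    rw [hxy] at this
    norm_num at this
  have := sq_sub_three_mul_sq_ne_of_zmod_nine x y (n := -1) (by decide)
  have := sq_sub_three_mul_sq_ne_of_zmod_nine x y (n := -4) (by decide)
  have := sq_sub_three_mul_sq_ne_of_zmod_nine x y (n := -6) (by decide)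
  omega

theorem exists_eq_sign_mul_sqrt_three_mul_zpow {x y : ℤ} (h : x ^ 2 - 3 * y ^ 2 = -3) :
    ∃ (n : ℤ) (ε : ℝ), (ε = 1 ∨ ε = -1) ∧
      (x : ℝ) + y * √3 = ε * √3 * (2 + √3) ^ n := by
  obtain ⟨m, rfl⟩ : (3 : ℤ) ∣ x :=
    Int.prime_three.dvd_of_dvd_pow (n := 2) ⟨y ^ 2 - 1, by linarith⟩
  obtain ⟨n, ε, hε, hunit⟩ :=
    exists_eq_sign_mul_zpow_of_sq_sub_three_mul_sq_eq_one (u := y) (v := m) (by linarith)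
  refine ⟨n, ε, hε, ?_⟩
  calc ((3 * m : ℤ) : ℝ) + y * √3 = √3 * (y + m * √3) := by
        push_cast
        linear_combination (-(m : ℝ)) * Real.mul_self_sqrt (by norm_num : (0 : ℝ) ≤ 3)
    _ = ε * √3 * (2 + √3) ^ n := by rw [hunit]; ring

theorem exists_eq_sign_mul_neg_one_add_sqrt_three_mul_zpow {x y : ℤ}
    (h : x ^ 2 - 3 * y ^ 2 = -2) :
    ∃ (n : ℤ) (ε : ℝ), (ε = 1 ∨ ε = -1) ∧
      (x : ℝ) + y * √3 = ε * (-1 + √3) * (2 + √3) ^ n := by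
  have hpar : Even (x + y) := by
    have : Even (x ^ 2 - 3 * y ^ 2) := ⟨-1, by rw [h]; norm_num⟩
    simpa [Int.even_sub, Int.even_mul, parity_simps, show ¬Even (3 : ℤ) by decide] using this
  obtain ⟨k, hk⟩ := hpar
  obtain rfl : x = 2 * k - y := by omega
  -- `(k + y) + k√3 = (x + y√3)(1 + √3) / 2`
  obtain ⟨n, ε, hε, hunit⟩ :=
    exists_eq_sign_mul_zpow_of_sq_sub_three_mul_sq_eq_one (u := k + y) (v := k) (by linarith)
  refine ⟨n, ε, hε, ?_⟩
  calc ((2 * k - y : ℤ) : ℝ) + y * √3 = (-1 + √3) * (((k + y : ℤ) : ℝ) + (k : ℤ) * √3) := by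
        push_cast
        linear_combination (-(k : ℝ)) * Real.mul_self_sqrt (by norm_num : (0 : ℝ) ≤ 3)
    _ = ε * (-1 + √3) * (2 + √3) ^ n := by rw [hunit]; ring

/-- Case `k = 6` of Proposition 4.2: a primitive element `x + y√3` of `ℤ[√3]` with norm
in `[-6,-1]` has norm `-3` or `-2`; solutions of `Nm = -3` are `±√3·u_f^n` and solutions
of `Nm = -2` are `±(-1+√3)·u_f^n`, where `u_f = 2 + √3`. -/
theorem stmt7 (x y : ℤ) :
    (Int.gcd x y = 1 → -6 ≤ x^2 - 3 * y^2 → x^2 - 3 * y^2 ≤ -1 →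
      x^2 - 3 * y^2 = -3 ∨ x^2 - 3 * y^2 = -2) ∧
    (x^2 - 3 * y^2 = -3 → ∃ (n : ℤ) (ε : ℝ), (ε = 1 ∨ ε = -1) ∧
      (x : ℝ) + y * Real.sqrt 3 = ε * Real.sqrt 3 * (2 + Real.sqrt 3) ^ n) ∧
    (x^2 - 3 * y^2 = -2 → ∃ (n : ℤ) (ε : ℝ), (ε = 1 ∨ ε = -1) ∧
      (x : ℝ) + y * Real.sqrt 3 = ε * (-1 + Real.sqrt 3) * (2 + Real.sqrt 3) ^ n) :=
  ⟨sq_sub_three_mul_sq_eq_neg_three_or_neg_two, exists_eq_sign_mul_sqrt_three_mul_zpow,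
    exists_eq_sign_mul_neg_one_add_sqrt_three_mul_zpow⟩
end

section
/- In the ring O = ℤ + ℤ·(-1+√5)/2 (ring of integers of ℚ(√5)), every primitive element with norm in [-5, -1] has norm -5 or -1. Every solution of Nm(a) = -5 is of the form ±√5·u_f^(2n), and every solution of Nm(a) = -1 is of the form ±u_f^(2n+1), where u_f = (1+√5)/2. -/
/-!
Write elements of `ℤ[φ]` as `x + yφ`, with conjugate `x + yψ` and norm `x² + xy - y²`.
Every positive unit `u` of norm `1` is `φ^(2n)`: choosing `n` with `φ^(2n) ≤ u < φ^(2n+2)`,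
the unit `u φ^(-2n)` lies in `[1, φ²)`, and there its conjugate lies in `(ψ², 1]`, so the
difference `y√5` lies in `[0, φ² - ψ²) = [0, √5)`, whence `y = 0` and the unit is `1`.
An element of norm `-1` is `φ` times a unit of norm `1`; an element of norm `-5` is divisible
by `√5` (as `5 ∣ d`) and is `√5` times a unit of norm `1`. The norms `-2, -3, -4` are excluded
for coprime `(d, r)` modulo `2` and `5`.
-/

open Real goldenRatio

/-- `(a, b)` is an element `x + yφ` of `ℤ[φ]` together with its Galois conjugate `x + yψ`. -/
def IsGoldenConjPair (a b : ℝ) : Prop :=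
  ∃ x y : ℤ, a = x + y * φ ∧ b = x + y * ψ

lemma add_mul_goldenRatio_mul_add_mul_goldenConj (x y : ℝ) :
    (x + y * φ) * (x + y * ψ) = x ^ 2 + x * y - y ^ 2 := by
  linear_combination (x * y) * goldenRatio_add_goldenConj + y ^ 2 * goldenRatio_mul_goldenConj

lemma goldenRatio_sq_sub_goldenConj_sq : φ ^ 2 - ψ ^ 2 = √5 := by
  rw [sq_sub_sq, goldenRatio_add_goldenConj, goldenRatio_sub_goldenConj, one_mul]

namespace IsGoldenConjPair

variable {a b c d : ℝ}

lemma mul (h : IsGoldenConjPair a b) (h' : IsGoldenConjPair c d) :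
    IsGoldenConjPair (a * c) (b * d) := by
  obtain ⟨x, y, rfl, rfl⟩ := h
  obtain ⟨u, v, rfl, rfl⟩ := h'
  refine ⟨x * u + y * v, x * v + y * u + y * v, ?_, ?_⟩ <;> push_cast
  · linear_combination (y * v : ℝ) * goldenRatio_sq
  · linear_combination (y * v : ℝ) * goldenConj_sq

lemma neg (h : IsGoldenConjPair a b) : IsGoldenConjPair (-a) (-b) := by
  obtain ⟨x, y, rfl, rfl⟩ := h
  exact ⟨-x, -y, by push_cast; ring, by push_cast; ring⟩

end IsGoldenConjPair

lemma isGoldenConjPair_zpow (n : ℤ) : IsGoldenConjPair (φ ^ n) (ψ ^ n) := by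
  induction n using Int.induction_on with
  | zero => exact ⟨1, 0, by simp, by simp⟩
  | succ k ih =>
    rw [zpow_add_one₀ goldenRatio_ne_zero, zpow_add_one₀ goldenConj_ne_zero]
    exact ih.mul ⟨0, 1, by simp, by simp⟩
  | pred k ih =>
    rw [zpow_sub_one₀ goldenRatio_ne_zero, zpow_sub_one₀ goldenConj_ne_zero, inv_goldenRatio,
      inv_goldenConj]
    refine ih.mul ⟨-1, 1, ?_, ?_⟩ <;> push_cast <;>
      linear_combination -goldenRatio_add_goldenConj

namespace IsGoldenConjPair

variable {a b : ℝ}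

lemma eq_one_of_mul_eq_one (h : IsGoldenConjPair a b) (hab : a * b = 1) (h1 : 1 ≤ a)
    (h2 : a < φ ^ 2) : a = 1 := by
  obtain ⟨x, y, rfl, hb⟩ := h
  have hsub : (x + y * φ) - b = y * √5 := by
    rw [hb, ← goldenRatio_sub_goldenConj]; ring
  have hb_pos : 0 < b := pos_of_mul_pos_right (hab ▸ one_pos) (by linarith)
  have hb_le : b ≤ 1 := by nlinarith
  have hb_gt : ψ ^ 2 < b := by
    have hψφ : ψ ^ 2 * φ ^ 2 = 1 := by rw [← mul_pow, goldenConj_mul_goldenRatio]; norm_num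
    nlinarith [mul_lt_mul_of_pos_right h2 hb_pos]
  have h5 : (0 : ℝ) < √5 := by positivity
  have hy0 : (0 : ℝ) ≤ y := by nlinarith
  have hy1 : (y : ℝ) < 1 := by nlinarith [goldenRatio_sq_sub_goldenConj_sq]
  obtain rfl : y = 0 := by
    have : 0 ≤ y := by exact_mod_cast hy0
    have : y < 1 := by exact_mod_cast hy1
    omega
  simp only [Int.cast_zero, zero_mul, add_zero] at hab hb h1 ⊢
  subst hb
  nlinarith

lemma exists_eq_zpow_of_mul_eq_one (h : IsGoldenConjPair a b) (hab : a * b = 1) (ha : 0 < a) :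
    ∃ n : ℤ, a = φ ^ (2 * n) := by
  obtain ⟨n, hn1, hn2⟩ := exists_mem_Ico_zpow ha (one_lt_pow₀ one_lt_goldenRatio two_ne_zero)
  have hpow : (φ ^ 2) ^ n = φ ^ (2 * n) := by rw [zpow_mul]; norm_cast
  have hpos : 0 < φ ^ (2 * n) := zpow_pos goldenRatio_pos _
  rw [hpow] at hn1
  rw [zpow_add_one₀ (by positivity), hpow] at hn2
  have hpair : IsGoldenConjPair (a / φ ^ (2 * n)) (b * ψ ^ (-(2 * n))) := by
    simpa only [zpow_neg, div_eq_mul_inv] using h.mul (isGoldenConjPair_zpow (-(2 * n)))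
  refine ⟨n, (div_eq_one_iff_eq hpos.ne').1 (hpair.eq_one_of_mul_eq_one ?_ ?_ ?_)⟩
  · rw [div_eq_mul_inv, ← zpow_neg, mul_mul_mul_comm, hab, ← mul_zpow,
      goldenRatio_mul_goldenConj, one_mul, Even.neg_one_zpow (by simp)]
  · exact (one_le_div₀ hpos).2 hn1
  · exact (div_lt_iff₀ hpos).2 (by linarith)

end IsGoldenConjPair

theorem exists_eq_sign_mul_goldenRatio_zpow_of_norm_eq_one (x y : ℤ)
    (h : x ^ 2 + x * y - y ^ 2 = 1) :
    ∃ (n : ℤ) (ε : ℝ), (ε = 1 ∨ ε = -1) ∧ (x + y * φ : ℝ) = ε * φ ^ (2 * n) := by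
  have hpair : IsGoldenConjPair (x + y * φ) (x + y * ψ) := ⟨x, y, rfl, rfl⟩
  have hnorm : (x + y * φ : ℝ) * (x + y * ψ) = 1 := by
    rw [add_mul_goldenRatio_mul_add_mul_goldenConj]; exact_mod_cast h
  rcases (left_ne_zero_of_mul_eq_one hnorm).lt_or_gt with hneg | hpos
  · obtain ⟨n, hn⟩ := hpair.neg.exists_eq_zpow_of_mul_eq_one (by rwa [neg_mul_neg])
      (neg_pos.2 hneg)
    exact ⟨n, -1, Or.inr rfl, by linarith⟩
  · obtain ⟨n, hn⟩ := hpair.exists_eq_zpow_of_mul_eq_one hnorm hpos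
    exact ⟨n, 1, Or.inl rfl, by rw [hn, one_mul]⟩

lemma eq_neg_five_or_eq_neg_one_of_gcd_eq_one (d r : ℤ) (hdr : Int.gcd d r = 1)
    (h5 : -5 ≤ d ^ 2 + 5 * r * d + 5 * r ^ 2) (h1 : d ^ 2 + 5 * r * d + 5 * r ^ 2 ≤ -1) :
    d ^ 2 + 5 * r * d + 5 * r ^ 2 = -5 ∨ d ^ 2 + 5 * r * d + 5 * r ^ 2 = -1 := by
  set N := d ^ 2 + 5 * r * d + 5 * r ^ 2
  have hodd : ¬ (2 : ℤ) ∣ N := by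
    intro h
    have key : ∀ a b : ZMod 2, a ^ 2 + 5 * b * a + 5 * b ^ 2 = 0 → a = 0 ∧ b = 0 := by decide
    obtain ⟨hd, hr⟩ := key d r (by exact_mod_cast (ZMod.intCast_zmod_eq_zero_iff_dvd N 2).2 h)
    have := Int.dvd_gcd ((ZMod.intCast_zmod_eq_zero_iff_dvd d 2).1 hd)
      ((ZMod.intCast_zmod_eq_zero_iff_dvd r 2).1 hr)
    rw [hdr] at this
    norm_num at this
  have hne : N ≠ -3 := by
    intro h
    have key : ∀ a b : ZMod 5, a ^ 2 + 5 * b * a + 5 * b ^ 2 ≠ -3 := by decide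
    exact key d r (by exact_mod_cast congrArg (Int.cast : ℤ → ZMod 5) h)
  omega

/-- Case `k = 5` of Proposition 4.2: for coprime `(d,r)`, the element
`a = -d + r(-5+√5)/2` of the ring of integers of `ℚ(√5)` has norm
`N = d² + 5rd + 5r²`; if `N ∈ [-5,-1]` then `N = -5` or `N = -1`. Solutions of
`Nm(a) = -5` are `±√5·u_f^(2n)` and solutions of `Nm(a) = -1` are `±u_f^(2n+1)`,
where `u_f = (1+√5)/2`. -/
theorem stmt8 (d r : ℤ) :
    let N : ℤ := d^2 + 5 * r * d + 5 * r^2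
    (Int.gcd d r = 1 → -5 ≤ N → N ≤ -1 → N = -5 ∨ N = -1) ∧
    (N = -5 → ∃ (n : ℤ) (ε : ℝ), (ε = 1 ∨ ε = -1) ∧
      (-(d : ℝ)) + r * ((-5 + Real.sqrt 5) / 2) =
        ε * Real.sqrt 5 * (((1 + Real.sqrt 5) / 2) ^ (2 * n))) ∧
    (N = -1 → ∃ (n : ℤ) (ε : ℝ), (ε = 1 ∨ ε = -1) ∧
      (-(d : ℝ)) + r * ((-5 + Real.sqrt 5) / 2) =
        ε * (((1 + Real.sqrt 5) / 2) ^ (2 * n + 1))) := by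
  intro N
  have hsqrt : √5 ^ 2 = 5 := sq_sqrt (by norm_num)
  refine ⟨eq_neg_five_or_eq_neg_one_of_gcd_eq_one d r, fun hN => ?_, fun hN => ?_⟩
  · obtain ⟨e, rfl⟩ : (5 : ℤ) ∣ d :=
      Int.Prime.dvd_pow' (k := 2) Nat.prime_five ⟨-1 - r * d - r ^ 2, by linear_combination hN⟩
    obtain ⟨n, ε, hε, hu⟩ :=
      exists_eq_sign_mul_goldenRatio_zpow_of_norm_eq_one (r + e) (-r - 2 * e) (by linarith)
    refine ⟨n, ε, hε, ?_⟩
    show _ = ε * √5 * φ ^ (2 * n)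
    calc -((5 * e : ℤ) : ℝ) + r * ((-5 + √5) / 2)
        = √5 * (((r + e : ℤ) : ℝ) + (-r - 2 * e : ℤ) * φ) := by
          push_cast; linear_combination ((r : ℝ) / 2 + e) * hsqrt
      _ = ε * √5 * φ ^ (2 * n) := by rw [hu]; ring
  · obtain ⟨n, ε, hε, hu⟩ :=
      exists_eq_sign_mul_goldenRatio_zpow_of_norm_eq_one (d + 4 * r) (-d - 3 * r)
        (by linear_combination -hN)
    refine ⟨n, ε, hε, ?_⟩
    show _ = ε * φ ^ (2 * n + 1)
    calc -(d : ℝ) + r * ((-5 + √5) / 2)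
        = (((d + 4 * r : ℤ) : ℝ) + (-d - 3 * r : ℤ) * φ) * φ := by
          push_cast; linear_combination ((d + 3 * r : ℝ) / 4) * hsqrt
      _ = ε * φ ^ (2 * n + 1) := by rw [hu, zpow_add_one₀ goldenRatio_ne_zero]; ring
end

section
/- Define u₁ = (1/2)(ε₁+ε₂+ε₃+ε₄), u₂ = (1/2)(-ε₁+ε₂+ε₃+ε₄), u₃ = ε₄ in ℝ⁴ (with standard orthonormal basis ε₁,...,ε₄), and let M be the lattice of vectors Σxᵢεᵢ with all xᵢ ∈ (1/2)ℤ and xᵢ - xⱼ ∈ ℤ for all i, j. Then the only unit vectors in M that are nonnegative linear combinations of the four vectors ε₁+ε₂+ε₃+ε₄, -ε₁+ε₂+ε₃+ε₄, ε₃+ε₄, ε₄ are exactly u₁, u₂, u₃. -/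
/-!
The four vectors span the closed Weyl chamber `|x₀| ≤ x₁ ≤ x₂ ≤ x₃` of `D₄`; only the inclusion
of their cone in the chamber is needed. For `x ∈ M`, `n = 2x` is then an integer vector in the
chamber with `∑ nᵢ² = 4`. Since `n₁ ≤ n₂ ≤ n₃` are nonnegative, `3 n₁² ≤ 4` and `2 n₂² ≤ 4`, which
leaves finitely many candidates, and only `(±1, 1, 1, 1)` and `(0, 0, 0, 2)` survive.
-/

def InChamber {α : Type*} [AddGroup α] [Lattice α] (x : Fin 4 → α) : Prop :=
  |x 0| ≤ x 1 ∧ x 1 ≤ x 2 ∧ x 2 ≤ x 3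

theorem inChamber_of_nonneg_comb {c : Fin 4 → ℝ} (hc : ∀ i, 0 ≤ c i) :
    InChamber fun i => c 0 * (![1,1,1,1] : Fin 4 → ℝ) i + c 1 * (![-1,1,1,1] : Fin 4 → ℝ) i +
        c 2 * (![0,0,1,1] : Fin 4 → ℝ) i + c 3 * (![0,0,0,1] : Fin 4 → ℝ) i := by
  have := hc 0; have := hc 1; have := hc 2; have := hc 3
  refine ⟨abs_le.2 ⟨?_, ?_⟩, ?_, ?_⟩ <;> simp <;> linarith

theorem inChamber_intCast_div_two_iff (n : Fin 4 → ℤ) :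
    (InChamber fun i => (n i : ℝ) / 2) ↔ InChamber n := by
  simp only [InChamber, abs_div, abs_two, div_le_div_iff_of_pos_right (two_pos (α := ℝ)),
    ← Int.cast_abs, Int.cast_le]

theorem eq_of_inChamber_of_sum_sq_eq_four {n : Fin 4 → ℤ} (hn : InChamber n)
    (hsq : ∑ i, n i ^ 2 = 4) :
    n = ![1, 1, 1, 1] ∨ n = ![-1, 1, 1, 1] ∨ n = ![0, 0, 0, 2] := by
  obtain ⟨h01, h12, h23⟩ := hn
  obtain ⟨h01l, h01r⟩ := abs_le.1 h01
  rw [Fin.sum_univ_four] at hsq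
  have : n 0 ≤ 1 := by nlinarith
  have : -1 ≤ n 0 := by nlinarith
  have : 0 ≤ n 1 := (abs_nonneg _).trans h01
  have : n 1 ≤ 1 := by nlinarith
  have : n 2 ≤ 1 := by nlinarith
  have : n 3 ≤ 2 := by nlinarith
  have hn : n = ![n 0, n 1, n 2, n 3] := by ext i; fin_cases i <;> rfl
  rw [hn]
  generalize n 0 = a, n 1 = b, n 2 = c, n 3 = d at *
  interval_cases a <;> interval_cases b <;> interval_cases c <;> interval_cases d <;> simp_all

theorem stmt10_general (x : Fin 4 → ℝ)
    (hM1 : ∀ i, ∃ m : ℤ, x i = (m : ℝ) / 2)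
    (hcomb : ∃ c : Fin 4 → ℝ, (∀ i, 0 ≤ c i) ∧
      x = fun i => c 0 * (![1,1,1,1] : Fin 4 → ℝ) i + c 1 * (![-1,1,1,1] : Fin 4 → ℝ) i +
        c 2 * (![0,0,1,1] : Fin 4 → ℝ) i + c 3 * (![0,0,0,1] : Fin 4 → ℝ) i)
    (hunit : ∑ i, (x i)^2 = 1) :
    x = ![1/2, 1/2, 1/2, 1/2] ∨ x = ![-1/2, 1/2, 1/2, 1/2] ∨ x = ![0, 0, 0, 1] := by
  choose n hn using hM1
  obtain rfl : x = fun i => (n i : ℝ) / 2 := funext hn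
  obtain ⟨c, hc, hx⟩ := hcomb
  have hch : InChamber n := (inChamber_intCast_div_two_iff n).1 (hx ▸ inChamber_of_nonneg_comb hc)
  have hsq : ∑ i, n i ^ 2 = 4 := by
    simp only [div_pow, ← Finset.sum_div] at hunit
    rw [div_eq_one_iff_eq (by norm_num)] at hunit
    norm_num at hunit
    exact_mod_cast hunit
  rcases eq_of_inChamber_of_sum_sq_eq_four hch hsq with rfl | rfl | rfl
  · left; ext i; fin_cases i <;> norm_num
  · right; left; ext i; fin_cases i <;> norm_num
  · right; right; ext i; fin_cases i <;> norm_num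

/-- Lemma 3.8: the only unit vectors in the lattice `M ⊂ ℝ⁴` (vectors with all
coordinates in `(1/2)ℤ` and pairwise differences in `ℤ`) that are nonnegative linear
combinations of `ε₁+ε₂+ε₃+ε₄`, `-ε₁+ε₂+ε₃+ε₄`, `ε₃+ε₄`, `ε₄` are
`u₁ = (ε₁+ε₂+ε₃+ε₄)/2`, `u₂ = (-ε₁+ε₂+ε₃+ε₄)/2`, `u₃ = ε₄`. -/
theorem stmt10 (x : Fin 4 → ℝ)
    (hM1 : ∀ i, ∃ m : ℤ, x i = (m : ℝ) / 2)
    (hM2 : ∀ i j, ∃ m : ℤ, x i - x j = (m : ℝ))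
    (hcomb : ∃ c : Fin 4 → ℝ, (∀ i, 0 ≤ c i) ∧
      x = fun i => c 0 * (![1,1,1,1] : Fin 4 → ℝ) i + c 1 * (![-1,1,1,1] : Fin 4 → ℝ) i +
        c 2 * (![0,0,1,1] : Fin 4 → ℝ) i + c 3 * (![0,0,0,1] : Fin 4 → ℝ) i)
    (hunit : ∑ i, (x i)^2 = 1) :
    x = ![1/2, 1/2, 1/2, 1/2] ∨ x = ![-1/2, 1/2, 1/2, 1/2] ∨ x = ![0, 0, 0, 1] :=
  stmt10_general x hM1 hcomb hunit
end

section
/- Let A' ⊂ ℝ⁸ be the convex hull of the rays from ε₈ through the other 8 vertices of the fundamental E₈ alcove A, and for 0 ≤ δ ≤ 2 let H_δ be the hyperplane {x : (ε₈ - x, ω₁) = δ} where ω₁ = 2ε₈. Then for all x in A' ∩ H_δ one has (δ/2 - 1)² ≤ (x, x) ≤ 2δ² - δ + 1. -/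
/-!
Write `x = ε₈ + ∑ sᵢ (vᵢ - ε₈)`. Its last coordinate is `1 - T` with `T = ∑ sᵢ (1 - (vᵢ)₈)`,
and `T = δ/2` on `H_δ`; this alone gives the lower bound. For the upper bound, every vertex
satisfies `|π vᵢ|² ≤ 7 (1 - (vᵢ)₈)²`, where `π` forgets the last coordinate (with equality for
the first two vertices), so Cauchy–Schwarz with the weights `sᵢ (1 - (vᵢ)₈)` gives
`|π x|² ≤ 7 T²`, whence `(x, x) ≤ 7 T² + (1 - T)² = 2δ² - δ + 1`.
-/

def dot8 (x y : Fin 8 → ℝ) : ℝ := ∑ i, x i * y i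

/-- The vertex `ε₈ = ω₁/2` of the fundamental alcove of `E₈`. -/
noncomputable def e8vert : Fin 8 → ℝ := ![0, 0, 0, 0, 0, 0, 0, 1]

/-- The eight vertices of the fundamental alcove of `E₈` other than `ε₈`. -/
noncomputable def alcoveVerts : Fin 8 → Fin 8 → ℝ :=
  ![![1/6, 1/6, 1/6, 1/6, 1/6, 1/6, 1/6, 5/6],
    ![-1/8, 1/8, 1/8, 1/8, 1/8, 1/8, 1/8, 7/8],
    ![0, 0, 1/6, 1/6, 1/6, 1/6, 1/6, 5/6],
    ![0, 0, 0, 1/5, 1/5, 1/5, 1/5, 4/5],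
    ![0, 0, 0, 0, 1/4, 1/4, 1/4, 3/4],
    ![0, 0, 0, 0, 0, 1/3, 1/3, 2/3],
    ![0, 0, 0, 0, 0, 0, 1/2, 1/2],
    ![0, 0, 0, 0, 0, 0, 0, 0]]

open Finset

theorem sum_sq_sum_mul_le_mul_sq {ι κ : Type*} [Fintype ι] [Fintype κ]
    {s c : ι → ℝ} {w : ι → κ → ℝ} {M : ℝ} (hs : ∀ i, 0 ≤ s i) (hc : ∀ i, 0 < c i)
    (hw : ∀ i, ∑ j, w i j ^ 2 ≤ M * c i ^ 2) :
    ∑ j, (∑ i, s i * w i j) ^ 2 ≤ M * (∑ i, s i * c i) ^ 2 := by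
  have hcoord (j : κ) :
      (∑ i, s i * w i j) ^ 2 ≤ (∑ i, s i * c i) * ∑ i, s i / c i * w i j ^ 2 :=
    sum_sq_le_sum_mul_sum_of_sq_le_mul _
      (fun i _ => mul_nonneg (hs i) (hc i).le)
      (fun i _ => mul_nonneg (div_nonneg (hs i) (hc i).le) (sq_nonneg _))
      (fun i _ => le_of_eq (by field_simp [(hc i).ne']))
  have hterm (i : ι) : s i / c i * (M * c i ^ 2) = M * (s i * c i) := by
    field_simp [(hc i).ne']
  calc ∑ j, (∑ i, s i * w i j) ^ 2
      ≤ ∑ j, (∑ i, s i * c i) * ∑ i, s i / c i * w i j ^ 2 := sum_le_sum fun j _ => hcoord j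
    _ = (∑ i, s i * c i) * ∑ i, s i / c i * ∑ j, w i j ^ 2 := by
        rw [← mul_sum, sum_comm]
        simp_rw [mul_sum]
    _ ≤ (∑ i, s i * c i) * ∑ i, s i / c i * (M * c i ^ 2) := by
        gcongr with i
        · exact sum_nonneg fun i _ => mul_nonneg (hs i) (hc i).le
        · exact div_nonneg (hs i) (hc i).le
        · exact hw i
    _ = M * (∑ i, s i * c i) ^ 2 := by
        simp_rw [hterm, ← mul_sum]
        ring

theorem e8vert_castSucc (k : Fin 7) : e8vert k.castSucc = 0 := by
  fin_cases k <;> simp [e8vert]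

theorem e8vert_last : e8vert 7 = 1 := by simp [e8vert]

-- `1 - (vᵢ)₈ = (ε₈ - vᵢ, ω₁) / 2` is the depth of the vertex `vᵢ` below `ε₈`.
theorem alcoveVerts_depth_pos (i : Fin 8) : 0 < 1 - alcoveVerts i 7 := by
  fin_cases i <;> simp [alcoveVerts] <;> norm_num

theorem alcoveVerts_sum_sq_le (i : Fin 8) :
    ∑ k : Fin 7, alcoveVerts i k.castSucc ^ 2 ≤ 7 * (1 - alcoveVerts i 7) ^ 2 := by
  fin_cases i <;> simp [alcoveVerts, Fin.sum_univ_seven] <;> norm_num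

theorem stmt12_general (δ : ℝ) (x : Fin 8 → ℝ)
    (s : Fin 8 → ℝ) (hs : ∀ i, 0 ≤ s i)
    (hx : ∀ j, x j = e8vert j + ∑ i, s i * (alcoveVerts i j - e8vert j))
    (hH : 2 * (1 - x 7) = δ) :
    (δ / 2 - 1)^2 ≤ dot8 x x ∧ dot8 x x ≤ 2 * δ^2 - δ + 1 := by
  set T := ∑ i, s i * (1 - alcoveVerts i 7) with hT
  have hlast : x 7 = 1 - T := by
    rw [hx 7, e8vert_last, hT]
    simp only [mul_sub, sum_sub_distrib, mul_one]
    ring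
  have hδ : δ = 2 * T := by rw [← hH, hlast]; ring
  have hfirst (k : Fin 7) : x k.castSucc = ∑ i, s i * alcoveVerts i k.castSucc := by
    simp [hx, e8vert_castSucc]
  have hsplit : dot8 x x = ∑ k : Fin 7, x k.castSucc ^ 2 + x 7 ^ 2 := by
    simp [dot8, Fin.sum_univ_castSucc, sq]
  have hfirst_nonneg : 0 ≤ ∑ k : Fin 7, x k.castSucc ^ 2 := by positivity
  have hfirst_le : ∑ k : Fin 7, x k.castSucc ^ 2 ≤ 7 * T ^ 2 := by
    simp_rw [hfirst]
    exact sum_sq_sum_mul_le_mul_sq hs alcoveVerts_depth_pos alcoveVerts_sum_sq_le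
  rw [hsplit, hlast, hδ]
  constructor <;> nlinarith

/-- Bounds for `(x,x)` on `A' ∩ H_δ`, where `A'` is the convex hull of the rays from
`ε₈` through the other eight vertices of the fundamental `E₈` alcove, and `H_δ` is the
hyperplane `(ε₈ - x, ω₁) = δ` with `ω₁ = 2ε₈`: for `0 ≤ δ ≤ 2`,
`(δ/2 - 1)² ≤ (x,x) ≤ 2δ² - δ + 1`. -/
theorem stmt12 (δ : ℝ) (h0 : 0 ≤ δ) (h2 : δ ≤ 2) (x : Fin 8 → ℝ)
    (s : Fin 8 → ℝ) (hs : ∀ i, 0 ≤ s i)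
    (hx : ∀ j, x j = e8vert j + ∑ i, s i * (alcoveVerts i j - e8vert j))
    (hH : 2 * (1 - x 7) = δ) :
    (δ / 2 - 1)^2 ≤ dot8 x x ∧ dot8 x x ≤ 2 * δ^2 - δ + 1 :=
  stmt12_general δ x s hs hx hH
end

section
/- In ℙ² over an algebraically closed field of characteristic 2, suppose p₁ = (1:0:0), p₂ = (0:1:0), p₃ = (0:0:1), p₄ = (1:1:1), p₅ = (x₀:y₀:1), p₆ = (x₁:y₁:1) are six points, no three collinear, such that for each i the unique conic through the other five points is tangent to every line through pᵢ. Then x₀ + y₀ + 1 = 0, x₁ + y₁ + 1 = 0, x₁ = x₀², y₁ = x₀² + 1, and x₀ satisfies x₀² + x₀ + 1 = 0; in particular all six points have coordinates in 𝔽₄. -/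
/-- Evaluation of the quadratic form (conic) with coefficient vector `c` at the point
with homogeneous coordinates `v`: `c₀x² + c₁y² + c₂z² + c₃xy + c₄xz + c₅yz`. -/
def evalConic {K : Type*} [Field K] (c : Fin 6 → K) (v : Fin 3 → K) : K :=
  c 0 * v 0 ^ 2 + c 1 * v 1 ^ 2 + c 2 * v 2 ^ 2 +
    c 3 * v 0 * v 1 + c 4 * v 0 * v 2 + c 5 * v 1 * v 2

/-- The line through `p` and `m` is tangent to the conic `{evalConic c = 0}`: the line
meets the conic, and in exactly one projective point. -/
def IsTangentLine {K : Type*} [Field K] (c : Fin 6 → K) (p m : Fin 3 → K) : Prop :=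
  (∃ w : K × K, w ≠ 0 ∧ evalConic c (w.1 • p + w.2 • m) = 0) ∧
  ∀ w w' : K × K, w ≠ 0 → w' ≠ 0 →
    evalConic c (w.1 • p + w.2 • m) = 0 → evalConic c (w'.1 • p + w'.2 • m) = 0 →
    w.1 * w'.2 = w.2 * w'.1

/-!
In characteristic 2 the binary quadratic form `A a² + B ab + C b²` cut out on a line by a conic
has a single projective zero only if its middle coefficient `B` vanishes, and `B` is the polar
form of the conic, i.e. a partial derivative when the line runs in a coordinate direction. So if
every line through `p₆` is tangent to the conic through `p₁, …, p₅`, then `p₆` is its strange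
point; for the conic `a z (x + y) + y (x + z)` this gives `x₁ + y₁ = 1` and `x₁ = x₀²`. Exchanging
`p₅` and `p₆` gives `x₀ + y₀ = 1` and `x₀ = x₁²`, hence `x₀⁴ = x₀`, and non-collinearity rules
out `x₀ ∈ {0, 1}`.
-/

section

variable {K : Type*} [Field K]

/-- The polar bilinear form of the conic in characteristic 2, where the terms `2 cᵢ pᵢ mᵢ`
vanish. -/
def conicPolar (c : Fin 6 → K) (p m : Fin 3 → K) : K :=
  c 3 * (p 0 * m 1 + p 1 * m 0) + c 4 * (p 0 * m 2 + p 2 * m 0) + c 5 * (p 1 * m 2 + p 2 * m 1)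

/-- The paper's conic `a z (x + y) + y (x + z)` through `(1:0:0)`, `(0:1:0)`, `(0:0:1)`,
`(1:1:1)` and `(x:y:1)`, with `a = y (x + 1) / (x + y)`, scaled by `x + y` (char 2). -/
def conicThrough (x y : K) : Fin 6 → K :=
  ![0, 0, 0, x + y, x * y + y, x + x * y]

lemma conicThrough_ne_zero {x y : K} (h : x + y ≠ 0) : conicThrough x y ≠ 0 :=
  fun h0 => h (by simpa [conicThrough] using congrFun h0 3)

lemma ne_smul_of_apply_eq_zero {m q : Fin 3 → K} {i : Fin 3} (hm : m ≠ 0) (hmi : m i = 0)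
    (hqi : q i = 1) (t : K) : m ≠ t • q := by
  rintro rfl
  obtain rfl : t = 0 := by simpa [hqi] using hmi
  simp at hm

variable [CharP K 2]

lemma evalConic_smul_add_smul (c : Fin 6 → K) (p m : Fin 3 → K) (a b : K) :
    evalConic c (a • p + b • m) =
      a ^ 2 * evalConic c p + a * b * conicPolar c p m + b ^ 2 * evalConic c m := by
  simp only [evalConic, conicPolar, Pi.add_apply, Pi.smul_apply, smul_eq_mul]
  linear_combination a * b * (c 0 * p 0 * m 0 + c 1 * p 1 * m 1 + c 2 * p 2 * m 2) *
    CharTwo.two_eq_zero (R := K)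

/-- In characteristic 2 a zero `(t : 1)` comes with the second zero `(t + B/A : 1)`. -/
lemma middle_coeff_eq_zero_of_unique_zero [IsAlgClosed K] {A B C : K}
    (huniq : ∀ w w' : K × K, w ≠ 0 → w' ≠ 0 →
      w.1 ^ 2 * A + w.1 * w.2 * B + w.2 ^ 2 * C = 0 →
      w'.1 ^ 2 * A + w'.1 * w'.2 * B + w'.2 ^ 2 * C = 0 → w.1 * w'.2 = w.2 * w'.1) :
    B = 0 := by
  have two : (2 : K) = 0 := CharTwo.two_eq_zero
  by_contra hB
  by_cases hA : A = 0
  · have h := huniq (1, 0) (C, B) (by simp) (by simp [hB]) (by simp [hA])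
      (by rw [hA]; linear_combination B ^ 2 * C * two)
    simp [hB] at h
  · obtain ⟨t, ht⟩ := IsAlgClosed.exists_root (Polynomial.C A * .X ^ 2 + .C B * .X + .C C)
      (by rw [Polynomial.degree_quadratic hA]; decide)
    simp only [Polynomial.IsRoot, Polynomial.eval_add, Polynomial.eval_mul, Polynomial.eval_pow,
      Polynomial.eval_C, Polynomial.eval_X] at ht
    have hs : A * (B / A) = B := mul_div_cancel₀ B hA
    have h := huniq (t, 1) (t + B / A, 1) (by simp) (by simp) (by linear_combination ht)
      (by linear_combination ht + B / A * hs + (t * (B / A) * A + B / A * B) * two)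
    have hBA : B / A = 0 := by linear_combination -h
    exact hB (by rw [← hs, hBA, mul_zero])

lemma IsTangentLine.conicPolar_eq_zero [IsAlgClosed K] {c : Fin 6 → K} {p m : Fin 3 → K}
    (h : IsTangentLine c p m) : conicPolar c p m = 0 :=
  middle_coeff_eq_zero_of_unique_zero (A := evalConic c p) (C := evalConic c m)
    fun w w' hw hw' h₁ h₂ => h.2 w w' hw hw'
      (by rw [evalConic_smul_add_smul]; linear_combination h₁)
      (by rw [evalConic_smul_add_smul]; linear_combination h₂)

lemma evalConic_conicThrough_eq_zero {x y : K} {v : Fin 3 → K}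
    (hv : v = ![1, 0, 0] ∨ v = ![0, 1, 0] ∨ v = ![0, 0, 1] ∨ v = ![1, 1, 1] ∨ v = ![x, y, 1]) :
    evalConic (conicThrough x y) v = 0 := by
  have two : (2 : K) = 0 := CharTwo.two_eq_zero
  rcases hv with rfl | rfl | rfl | rfl | rfl <;>
    simp only [evalConic, conicThrough, Matrix.cons_val, Matrix.cons_val_zero, Matrix.cons_val_one]
  · ring
  · ring
  · ring
  · linear_combination (x + y + x * y) * two
  · linear_combination (x ^ 2 * y + x * y ^ 2 + x * y) * two

lemma strange_point_eqs_of_isTangentLine [IsAlgClosed K] {x y x' y' : K}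
    (htan : ∀ m : Fin 3 → K, m ≠ 0 → (∀ t : K, m ≠ t • ![x', y', 1]) →
      IsTangentLine (conicThrough x y) ![x', y', 1] m) :
    (x + y) * y' + (x * y + y) = 0 ∧ (x + y) * x' + (x + x * y) = 0 := by
  have h₁ := (htan ![1, 0, 0] (by simp) (ne_smul_of_apply_eq_zero (i := 2) (by simp) rfl rfl))
    |>.conicPolar_eq_zero
  have h₂ := (htan ![0, 1, 0] (by simp) (ne_smul_of_apply_eq_zero (i := 2) (by simp) rfl rfl))
    |>.conicPolar_eq_zero
  simp only [conicPolar, conicThrough, Matrix.cons_val, Matrix.cons_val_zero, Matrix.cons_val_one,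
    mul_zero, mul_one, zero_add, add_zero] at h₁ h₂
  exact ⟨h₁, h₂⟩

lemma add_eq_one_of_strange_point_eqs {x y x' y' : K} (hxy : x + y ≠ 0)
    (h₁ : (x + y) * y' + (x * y + y) = 0) (h₂ : (x + y) * x' + (x + x * y) = 0) : x' + y' = 1 :=
  mul_left_cancel₀ hxy <| by
    linear_combination h₁ + h₂ - (x * y + x + y) * CharTwo.two_eq_zero (R := K)

lemma eq_sq_of_strange_point_eqs {x y x' y' : K} (hxy : x + y = 1) (hxy' : x' + y' = 1)
    (h₁ : (x + y) * y' + (x * y + y) = 0) : x' = x ^ 2 := by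
  linear_combination -h₁ + hxy' + (y' + x + 1) * hxy + (1 - x ^ 2) * CharTwo.two_eq_zero (R := K)

/-- `x⁴ + x = x (x + 1) (x² + x + 1)` in characteristic 2. -/
lemma sq_add_self_add_one_eq_zero {x : K} (h : x ^ 4 = x) (h₀ : x ≠ 0) (h₁ : x ≠ 1) :
    x ^ 2 + x + 1 = 0 := by
  have two : (2 : K) = 0 := CharTwo.two_eq_zero
  have hprod : x * (x + 1) * (x ^ 2 + x + 1) = 0 := by
    linear_combination h + (x ^ 3 + x ^ 2 + x) * two
  refine (mul_eq_zero.mp hprod).resolve_left (mul_ne_zero h₀ fun h => h₁ ?_)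
  linear_combination h - two

end

/-- Lemma 5.2 (coordinate computation): in `ℙ²` over an algebraically closed field of
characteristic 2, if `p₁ = (1:0:0)`, `p₂ = (0:1:0)`, `p₃ = (0:0:1)`, `p₄ = (1:1:1)`,
`p₅ = (x₀:y₀:1)`, `p₆ = (x₁:y₁:1)` are six points, no three collinear, such that for
each `i` every conic through the other five points is tangent to every line through
`pᵢ`, then `x₀+y₀+1 = 0`, `x₁+y₁+1 = 0`, `x₁ = x₀²`, `y₁ = x₀²+1` and
`x₀² + x₀ + 1 = 0` (so all coordinates lie in `𝔽₄`). -/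
theorem stmt16 {K : Type*} [Field K] [IsAlgClosed K] [CharP K 2]
    (x₀ y₀ x₁ y₁ : K) (p : Fin 6 → Fin 3 → K)
    (hp0 : p 0 = ![1, 0, 0]) (hp1 : p 1 = ![0, 1, 0]) (hp2 : p 2 = ![0, 0, 1])
    (hp3 : p 3 = ![1, 1, 1]) (hp4 : p 4 = ![x₀, y₀, 1]) (hp5 : p 5 = ![x₁, y₁, 1])
    (hcol : ∀ i j k : Fin 6, i ≠ j → i ≠ k → j ≠ k →
      Matrix.det (Matrix.of ![p i, p j, p k]) ≠ 0)
    (htan : ∀ i : Fin 6, ∀ c : Fin 6 → K, c ≠ 0 →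
      (∀ j : Fin 6, j ≠ i → evalConic c (p j) = 0) →
      ∀ m : Fin 3 → K, m ≠ 0 → (∀ t : K, m ≠ t • p i) →
      IsTangentLine c (p i) m) :
    x₀ + y₀ + 1 = 0 ∧ x₁ + y₁ + 1 = 0 ∧ x₁ = x₀ ^ 2 ∧ y₁ = x₀ ^ 2 + 1 ∧
      x₀ ^ 2 + x₀ + 1 = 0 := by
  have hcol' := fun i j k (h : i ≠ j ∧ i ≠ k ∧ j ≠ k) => hcol i j k h.1 h.2.1 h.2.2
  have hx₀ : x₀ ≠ 0 := by
    simpa [hp1, hp2, hp4, Matrix.det_fin_three] using hcol' 1 2 4 (by decide)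
  have hx₀' : x₀ ≠ 1 := fun h =>
    hcol' 1 3 4 (by decide) (by simp [hp1, hp3, hp4, Matrix.det_fin_three, h])
  have hs₀ : x₀ + y₀ ≠ 0 := by
    simpa [hp2, hp3, hp4, Matrix.det_fin_three, CharTwo.sub_eq_add, add_comm]
      using hcol' 2 3 4 (by decide)
  have hs₁ : x₁ + y₁ ≠ 0 := by
    simpa [hp2, hp3, hp5, Matrix.det_fin_three, CharTwo.sub_eq_add, add_comm]
      using hcol' 2 3 5 (by decide)
  obtain ⟨E₁, E₂⟩ := strange_point_eqs_of_isTangentLine (x := x₀) (y := y₀) (by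
    simpa only [hp5] using htan 5 _ (conicThrough_ne_zero hs₀) fun j hj =>
      evalConic_conicThrough_eq_zero (by fin_cases j <;> simp_all))
  obtain ⟨E₃, E₄⟩ := strange_point_eqs_of_isTangentLine (x := x₁) (y := y₁) (by
    simpa only [hp4] using htan 4 _ (conicThrough_ne_zero hs₁) fun j hj =>
      evalConic_conicThrough_eq_zero (by fin_cases j <;> simp_all))
  have h₁ : x₁ + y₁ = 1 := add_eq_one_of_strange_point_eqs hs₀ E₁ E₂
  have h₀ : x₀ + y₀ = 1 := add_eq_one_of_strange_point_eqs hs₁ E₃ E₄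
  have hx₁ : x₁ = x₀ ^ 2 := eq_sq_of_strange_point_eqs h₀ h₁ E₁
  have hx₀₁ : x₀ = x₁ ^ 2 := eq_sq_of_strange_point_eqs h₁ h₀ E₃
  have hF₄ : x₀ ^ 2 + x₀ + 1 = 0 :=
    sq_add_self_add_one_eq_zero (by linear_combination -(x₀ ^ 2 + x₁) * hx₁ - hx₀₁) hx₀ hx₀'
  have two : (2 : K) = 0 := CharTwo.two_eq_zero
  refine ⟨by linear_combination h₀ + two, by linear_combination h₁ + two, hx₁, ?_, hF₄⟩
  linear_combination h₁ - hx₁ - x₀ ^ 2 * two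
end

section
/- In ℙ²(𝔽₄), any six points, no three of which are collinear, with the first four equal to (1:0:0), (0:1:0), (0:0:1), (1:1:1), have the remaining two points equal (in some order) to (ω : ω+1 : 1) and (ω² : ω²+1 : 1), where ω ∈ 𝔽₄ satisfies ω² + ω + 1 = 0. In particular, the configuration of six points of ℙ²(𝔽₄) in general position is unique up to projective equivalence and permutation. -/
/-!
Dehomogenising at the third coordinate, no three collinear with the frame
`(1:0:0), (0:1:0), (0:0:1), (1:1:1)` forces each further point to be `(x : y : 1)` with
`x, y ∉ {0, 1}` and `x ≠ y`. In `𝔽₄` the only elements outside `{0, 1}` are the two roots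
`ω, ω + 1 = ω²` of `X² + X + 1`, so `y = x + 1`. The two extra points must not be collinear
with `(1:0:0)`, so their `x`-coordinates differ as well, which leaves `ω` and `ω²`.
-/

open Matrix

section CardFour

variable {K : Type*} [Field K] [Fintype K]

theorem two_eq_zero_of_card_eq_four (hK : Fintype.card K = 4) : (2 : K) = 0 := by
  have h4 : (4 : K) = 0 := by
    simpa [hK] using card_nsmul_eq_zero (x := (1 : K))
  exact pow_eq_zero_iff two_ne_zero |>.mp (by linear_combination h4)

theorem sq_add_self_add_one_eq_zero_of_card_eq_four (hK : Fintype.card K = 4) {x : K}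
    (h0 : x ≠ 0) (h1 : x ≠ 1) : x ^ 2 + x + 1 = 0 := by
  have hx : x ^ 4 = x := hK ▸ FiniteField.pow_card x
  have hfactor : x * ((x - 1) * (x ^ 2 + x + 1)) = 0 := by linear_combination hx
  simpa [h0, sub_eq_zero, h1] using hfactor

theorem eq_add_one_of_card_eq_four (hK : Fintype.card K = 4) {x y : K}
    (hx0 : x ≠ 0) (hx1 : x ≠ 1) (hy0 : y ≠ 0) (hy1 : y ≠ 1) (hxy : x ≠ y) : y = x + 1 := by
  have hx := sq_add_self_add_one_eq_zero_of_card_eq_four hK hx0 hx1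
  have hy := sq_add_self_add_one_eq_zero_of_card_eq_four hK hy0 hy1
  have hfactor : (x - y) * (x + y + 1) = 0 := by linear_combination hx - hy
  have hsum : x + y + 1 = 0 := (mul_eq_zero.mp hfactor).resolve_left (sub_ne_zero.mpr hxy)
  linear_combination hsum - (x + 1) * two_eq_zero_of_card_eq_four hK

end CardFour

section StandardFrame

variable {K : Type*} [Field K]

def stdFrame : Fin 4 → Fin 3 → K := ![![1, 0, 0], ![0, 1, 0], ![0, 0, 1], ![1, 1, 1]]

theorem exists_eq_smul_of_det_stdFrame_ne_zero (q : Fin 3 → K)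
    (hq : ∀ i j : Fin 4, i ≠ j → det (of ![stdFrame i, stdFrame j, q]) ≠ 0) :
    ∃ c x y : K, c ≠ 0 ∧ x ≠ 0 ∧ x ≠ 1 ∧ y ≠ 0 ∧ y ≠ 1 ∧ x ≠ y ∧ q = c • ![x, y, 1] := by
  have h01 := hq 0 1 (by decide)
  have h02 := hq 0 2 (by decide)
  have h12 := hq 1 2 (by decide)
  have h03 := hq 0 3 (by decide)
  have h13 := hq 1 3 (by decide)
  have h23 := hq 2 3 (by decide)
  simp only [stdFrame, det_fin_three, of_apply, cons_val', cons_val_fin_one, cons_val_zero,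
    cons_val_one, cons_val, mul_one, one_mul, mul_zero, zero_mul, sub_zero, zero_sub, add_zero,
    zero_add, sub_self, ne_eq, neg_eq_zero, sub_eq_zero, neg_add_eq_zero] at h01 h02 h12 h03 h13 h23
  refine ⟨q 2, q 0 / q 2, q 1 / q 2, h01, div_ne_zero h12 h01, ?_, div_ne_zero h02 h01, ?_, ?_, ?_⟩
  · exact (div_eq_one_iff_eq h01).not.mpr (Ne.symm h13)
  · exact (div_eq_one_iff_eq h01).not.mpr (Ne.symm h03)
  · exact (div_left_inj' h01).not.mpr (Ne.symm h23)
  · ext i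
    fin_cases i <;> simp [mul_div_cancel₀ _ h01]

theorem det_stdFrame_zero_smul_smul (t s x y u v : K) :
    det (of ![stdFrame 0, t • ![x, y, 1], s • ![u, v, 1]]) = t * s * (y - v) := by
  simp only [stdFrame, det_fin_three, of_apply, cons_val', cons_val_fin_one, cons_val_zero,
    cons_val_one, cons_val, smul_cons, smul_eq_mul, smul_empty, mul_one, one_mul, zero_mul, sub_zero,
    add_zero]
  ring

end StandardFrame

theorem stmt17_general (p : Fin 6 → Fin 3 → GaloisField 2 2)
    (hp0 : p 0 = ![1, 0, 0]) (hp1 : p 1 = ![0, 1, 0]) (hp2 : p 2 = ![0, 0, 1])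
    (hp3 : p 3 = ![1, 1, 1])
    (hcol : ∀ i j k : Fin 6, i ≠ j → i ≠ k → j ≠ k →
      Matrix.det (Matrix.of ![p i, p j, p k]) ≠ 0) :
    ∃ ω : GaloisField 2 2, ω ^ 2 + ω + 1 = 0 ∧
      ∃ t s : GaloisField 2 2, t ≠ 0 ∧ s ≠ 0 ∧
        p 4 = t • ![ω, ω + 1, 1] ∧ p 5 = s • ![ω ^ 2, ω ^ 2 + 1, 1] := by
  have : Fintype (GaloisField 2 2) := Fintype.ofFinite _
  have hK : Fintype.card (GaloisField 2 2) = 4 := by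
    rw [Fintype.card_eq_nat_card, GaloisField.card 2 2 two_ne_zero]
    norm_num
  have hframe : ∀ i : Fin 4, p (Fin.castLE (by norm_num) i) = stdFrame i := by
    intro i; fin_cases i <;> assumption
  have hgen : ∀ k : Fin 6, 4 ≤ k.val →
      ∀ i j : Fin 4, i ≠ j → det (of ![stdFrame i, stdFrame j, p k]) ≠ 0 := by
    intro k hk i j hij
    rw [← hframe, ← hframe]
    refine hcol _ _ k (Fin.castLE_injective _ |>.ne hij) ?_ ?_ <;>
      exact Fin.ne_of_val_ne (by simp; omega)
  obtain ⟨t, x, y, ht, hx0, hx1, hy0, hy1, hxy, h4⟩ :=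
    exists_eq_smul_of_det_stdFrame_ne_zero (p 4) (hgen 4 le_rfl)
  obtain ⟨s, u, v, hs, hu0, hu1, hv0, hv1, huv, h5⟩ :=
    exists_eq_smul_of_det_stdFrame_ne_zero (p 5) (hgen 5 (by norm_num))
  have hy := eq_add_one_of_card_eq_four hK hx0 hx1 hy0 hy1 hxy
  have hv := eq_add_one_of_card_eq_four hK hu0 hu1 hv0 hv1 huv
  have hyv : y ≠ v := by
    have h045 := hcol 0 4 5 (by decide) (by decide) (by decide)
    rw [hp0, h4, h5, show ![(1 : GaloisField 2 2), 0, 0] = stdFrame 0 from rfl,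
      det_stdFrame_zero_smul_smul] at h045
    exact sub_ne_zero.mp (right_ne_zero_of_mul h045)
  have hu := eq_add_one_of_card_eq_four hK hx0 hx1 hu0 hu1 (fun h => hyv (by rw [hy, hv, h]))
  have hroot := sq_add_self_add_one_eq_zero_of_card_eq_four hK hx0 hx1
  have hsq : x ^ 2 = x + 1 := by
    linear_combination hroot - (x + 1) * two_eq_zero_of_card_eq_four hK
  refine ⟨x, hroot, t, s, ht, hs, by rw [h4, hy], by rw [h5, hv, hu, hsq]⟩

/-- Uniqueness part of Lemma 5.2: in `ℙ²(𝔽₄)`, any six points, no three collinear, with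
the first four equal to `(1:0:0), (0:1:0), (0:0:1), (1:1:1)`, have the remaining two
points equal (in some order, accounted for by the choice of the root `ω` of
`ω² + ω + 1 = 0`) to `(ω : ω+1 : 1)` and `(ω² : ω²+1 : 1)`. -/
theorem stmt17 (p : Fin 6 → Fin 3 → GaloisField 2 2)
    (hp0 : p 0 = ![1, 0, 0]) (hp1 : p 1 = ![0, 1, 0]) (hp2 : p 2 = ![0, 0, 1])
    (hp3 : p 3 = ![1, 1, 1])
    (hne : ∀ i, p i ≠ 0)
    (hcol : ∀ i j k : Fin 6, i ≠ j → i ≠ k → j ≠ k →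
      Matrix.det (Matrix.of ![p i, p j, p k]) ≠ 0) :
    ∃ ω : GaloisField 2 2, ω ^ 2 + ω + 1 = 0 ∧
      ∃ t s : GaloisField 2 2, t ≠ 0 ∧ s ≠ 0 ∧
        p 4 = t • ![ω, ω + 1, 1] ∧ p 5 = s • ![ω ^ 2, ω ^ 2 + 1, 1] :=
  stmt17_general p hp0 hp1 hp2 hp3 hcol
end
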